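/- Define operators e_{n+1,s} x^{(β)} = −q^{Σ_{i=s+1}^{n} β_i} x^{(β−ε_s)} for 1 ≤ s ≤ n and e_{j,s} x^{(β)} = q^{Σ_{i: s<i<j} β_i}[β_j+1] x^{(β−ε_s+ε_j)} for 1 ≤ s < j ≤ n. Then e_{n+1,s} = e_{n+1,j} e_{j,s} − q^{-1} e_{j,s} e_{n+1,j} for all 1 ≤ s < j ≤ n. -/

import Mathlib

/-! The computation reduces, on each basis vector `x^{(β)}`, to the `q`-integer identity
`[m + 1] - q⁻¹ [m] = q^m` with `m = β_j`, after splitting the exponent `Σ_{i>s} β_i` of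
`e_{n+1,s}` at `j`. The boundary cases `β_j = 0` and `β_s = 0` are handled by `[0] = 0` and by
the vanishing of `x^{(γ)}` for `γ` with a negative entry. -/

open Finset

/-- The quantum integer `[m] := (q^m - q^{-m})/(q - q^{-1})` for `m : ℤ`. -/
def qint {K : Type*} [Field K] (q : K) (m : ℤ) : K :=
  (q ^ m - q ^ (-m)) / (q - q⁻¹)

/-- `θ(ε_k, β) = q^{Σ_{s>k} β_s - Σ_{s<k} β_s}`. -/
def thq {K : Type*} [Field K] (q : K) (n : ℕ) (β : ℕ → ℤ) (k : ℕ) : K :=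
  q ^ ((∑ s ∈ Finset.Icc (k + 1) n, β s) - ∑ s ∈ Finset.Ico 1 k, β s)

/-- The `i`-th standard basis vector `ε_i`. -/
def eps (i : ℕ) : ℕ → ℤ := fun k => if k = i then 1 else 0

section QInt

variable {K : Type*} [Field K] {q : K}

lemma sub_inv_ne_zero_of_ne_one_of_ne_neg_one (hq0 : q ≠ 0) (hq1 : q ≠ 1) (hqm : q ≠ -1) :
    q - q⁻¹ ≠ 0 := by
  intro h
  have hsq : (q - 1) * (q + 1) = 0 := by
    field_simp at h
    linear_combination h
  rcases mul_eq_zero.1 hsq with h | h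
  · exact hq1 (by linear_combination h)
  · exact hqm (by linear_combination h)

@[simp]
lemma qint_zero (q : K) : qint q 0 = 0 := by
  simp [qint]

lemma qint_add_one_sub_inv_mul_qint (hq0 : q ≠ 0) (hden : q - q⁻¹ ≠ 0) (m : ℤ) :
    qint q (m + 1) - q⁻¹ * qint q m = q ^ m := by
  rw [qint, qint, ← mul_div_assoc, div_sub_div_same, div_eq_iff hden,
    zpow_add_one₀ hq0, neg_add, zpow_add₀ hq0, zpow_neg q m, zpow_neg_one]
  field_simp
  ring

end QInt

section Eps

@[simp]
lemma eps_self (i : ℕ) : eps i i = 1 := if_pos rfl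

@[simp]
lemma eps_of_ne {i k : ℕ} (h : k ≠ i) : eps i k = 0 := if_neg h

lemma sum_eps_of_notMem {i : ℕ} {S : Finset ℕ} (hi : i ∉ S) : ∑ k ∈ S, eps i k = 0 :=
  sum_eq_zero fun _ hk => eps_of_ne (ne_of_mem_of_not_mem hk hi)

lemma nonneg_sub_eps {n i : ℕ} {β : ℕ → ℤ} (hβ : ∀ k ∈ Icc 1 n, 0 ≤ β k) (hi : 0 < β i) :
    ∀ k ∈ Icc 1 n, 0 ≤ (β - eps i) k := by
  intro k hk
  by_cases hki : k = i
  · subst hki; simp; omega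
  · simpa [hki] using hβ k hk

lemma eps_nonneg (i k : ℕ) : 0 ≤ eps i k := by
  unfold eps; split_ifs <;> norm_num

lemma nonneg_add_eps {n i : ℕ} {β : ℕ → ℤ} (hβ : ∀ k ∈ Icc 1 n, 0 ≤ β k) :
    ∀ k ∈ Icc 1 n, 0 ≤ (β + eps i) k :=
  fun k hk => add_nonneg (hβ k hk) (eps_nonneg i k)

end Eps

lemma sum_Icc_succ_eq_sum_Ioo_add_add {M : Type*} [AddCommMonoid M] (f : ℕ → M) {s j n : ℕ}
    (hsj : s < j) (hjn : j ≤ n) :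
    ∑ i ∈ Icc (s + 1) n, f i = (∑ i ∈ Ioo s j, f i) + f j + ∑ i ∈ Icc (j + 1) n, f i := by
  rw [← Ico_add_one_right_eq_Icc, ← Ico_add_one_right_eq_Icc, ← Ico_add_one_left_eq_Ioo,
    ← sum_Ico_consecutive f (Nat.succ_le_of_lt hsj) (by omega : j ≤ n + 1),
    sum_eq_sum_Ico_succ_bot (by omega : j < n + 1), add_assoc]
  rfl

section Operators

variable {K V : Type*} [Field K] [AddCommGroup V] [Module K V] {q : K} {n s j : ℕ}
  {X : (ℕ → ℤ) → V} {β : ℕ → ℤ}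

lemma apply_X_sub_eps_of_raising (f : Module.End K V)
    (hX0 : ∀ β : ℕ → ℤ, (∃ k ∈ Icc 1 n, β k < 0) → X β = 0)
    (hf : ∀ β : ℕ → ℤ, (∀ k ∈ Icc 1 n, 0 ≤ β k) →
      f (X β) = (q ^ (∑ i ∈ Ioo s j, β i) * qint q (β j + 1)) • X (β - eps s + eps j))
    (hj : j ∈ Icc 1 n) (hβ : ∀ k ∈ Icc 1 n, 0 ≤ β k) :
    f (X (β - eps j)) = (q ^ (∑ i ∈ Ioo s j, β i) * qint q (β j)) • X (β - eps s) := by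
  rcases (hβ j hj).lt_or_eq with hbj | hbj
  · rw [hf _ (nonneg_sub_eps hβ hbj), sub_right_comm, sub_add_cancel]
    simp only [Pi.sub_apply]
    rw [sum_sub_distrib, sum_eps_of_notMem (by simp), sub_zero, eps_self, sub_add_cancel]
  · rw [hX0 _ ⟨j, hj, by simp [← hbj]⟩, map_zero, ← hbj, qint_zero, mul_zero, zero_smul]

lemma apply_X_sub_eps_add_eps_of_lowering (f : Module.End K V)
    (hX0 : ∀ β : ℕ → ℤ, (∃ k ∈ Icc 1 n, β k < 0) → X β = 0)
    (hf : ∀ β : ℕ → ℤ, (∀ k ∈ Icc 1 n, 0 ≤ β k) →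
      f (X β) = -(q ^ (∑ i ∈ Icc (j + 1) n, β i)) • X (β - eps j))
    (hsj : s < j) (hs : s ∈ Icc 1 n) (hβ : ∀ k ∈ Icc 1 n, 0 ≤ β k) :
    f (X (β - eps s + eps j)) = -(q ^ (∑ i ∈ Icc (j + 1) n, β i)) • X (β - eps s) := by
  rcases (hβ s hs).lt_or_eq with hbs | hbs
  · rw [hf _ (nonneg_add_eps (nonneg_sub_eps hβ hbs)), add_sub_cancel_right]
    simp only [Pi.add_apply, Pi.sub_apply]
    rw [sum_add_distrib, sum_sub_distrib, sum_eps_of_notMem (by simp; omega),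
      sum_eps_of_notMem (by simp), sub_zero, add_zero]
  · have hneg : ∀ γ : ℕ → ℤ, γ s = 0 → X (β - eps s + γ) = 0 := fun γ hγ =>
      hX0 _ ⟨s, hs, by simp [hγ, ← hbs]⟩
    rw [hneg _ (eps_of_ne hsj.ne), map_zero, ← add_zero (β - eps s), hneg 0 rfl, smul_zero]

end Operators

theorem qbracket_e_nplus1_s {K V : Type*} [Field K] [AddCommGroup V] [Module K V]
    (q : K) (hq0 : q ≠ 0) (hq1 : q ≠ 1) (hqm : q ≠ -1) (n : ℕ)
    (X : (ℕ → ℤ) → V)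
    (hX0 : ∀ β : ℕ → ℤ, (∃ k ∈ Finset.Icc 1 n, β k < 0) → X β = 0)
    (Ens : ℕ → Module.End K V) (E : ℕ → ℕ → Module.End K V)
    (hEns : ∀ s, 1 ≤ s → s ≤ n → ∀ β : ℕ → ℤ, (∀ k ∈ Finset.Icc 1 n, 0 ≤ β k) →
      Ens s (X β) = -(q ^ (∑ i ∈ Finset.Icc (s + 1) n, β i)) • X (β - eps s))
    (hE : ∀ j s, 1 ≤ s → s < j → j ≤ n → ∀ β : ℕ → ℤ, (∀ k ∈ Finset.Icc 1 n, 0 ≤ β k) →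
      E j s (X β) = (q ^ (∑ i ∈ Finset.Ioo s j, β i) * qint q (β j + 1)) •
        X (β - eps s + eps j)) :
    ∀ s j, 1 ≤ s → s < j → j ≤ n → ∀ β : ℕ → ℤ, (∀ k ∈ Finset.Icc 1 n, 0 ≤ β k) →
      Ens s (X β) = (Ens j * E j s - q⁻¹ • (E j s * Ens j)) (X β) := by
  intro s j hs hsj hjn β hβ
  have hj1 : 1 ≤ j := hs.trans hsj.le
  have hEnsj := hEns j hj1 hjn
  have hEjs := hE j s hs hsj hjn
  simp only [LinearMap.sub_apply, LinearMap.smul_apply, Module.End.mul_apply]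
  rw [hEjs β hβ, map_smul,
    apply_X_sub_eps_add_eps_of_lowering _ hX0 hEnsj hsj (mem_Icc.2 ⟨hs, hsj.le.trans hjn⟩) hβ,
    hEnsj β hβ, map_smul, apply_X_sub_eps_of_raising _ hX0 hEjs (mem_Icc.2 ⟨hj1, hjn⟩) hβ,
    hEns s hs (hsj.le.trans hjn) β hβ, smul_smul, smul_smul, smul_smul, ← sub_smul,
    sum_Icc_succ_eq_sum_Ioo_add_add β hsj hjn, zpow_add₀ hq0, zpow_add₀ hq0]
  congr 1
  linear_combination (q ^ (∑ i ∈ Ioo s j, β i) * q ^ (∑ i ∈ Icc (j + 1) n, β i)) *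
    qint_add_one_sub_inv_mul_qint hq0 (sub_inv_ne_zero_of_ne_one_of_ne_neg_one hq0 hq1 hqm) (β j)
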